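/- Let V be the t×t AR(1)-type correlation matrix V_{ij} = λ^{|i−j|} with λ ∈ (0,1), t > 3, and let P be a permutation matrix of the form 1 ⊕ Q ⊕ 1 with P ≠ I_t. Then det((V^{-1} + P^T V^{-1} P)^{-1}) < det(V)/2^t. -/

import Mathlib

/-!
Put `A = V⁻¹` and `B = Pᵀ A P = A.submatrix σ⁻¹ σ⁻¹`; both are positive definite with the same
determinant. With `S = A^{1/2}` and `M = S⁻¹ B S⁻¹` we get `det (A + B) = det A · det (1 + M)`
and `det M = 1`, and AM–GM on each eigenvalue, `4μ ≤ (1 + μ)²` with equality only at `μ = 1`,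
gives `det (1 + M) > 2^t` unless `M = 1`, i.e. unless `B = A`. But `B = A` means that `V` is
invariant under `σ`, and since `σ` fixes `0` and `λ^|j|` determines `j`, this forces `σ = 1`.
Positive definiteness of `V` comes from its Cholesky factorisation.
-/

open Matrix Finset

namespace Matrix
variable {n : Type*} [Fintype n] [DecidableEq n]

theorem IsHermitian.det_cfc {A : Matrix n n ℝ} (hA : A.IsHermitian) (f : ℝ → ℝ) :
    (cfc f A).det = ∏ i, f (hA.eigenvalues i) := by
  rw [hA.cfc_eq]
  simp [IsHermitian.cfc, -Unitary.conjStarAlgAut_apply]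

theorem IsHermitian.eq_one_of_eigenvalues_eq_one {A : Matrix n n ℝ} (hA : A.IsHermitian)
    (h : ∀ i, hA.eigenvalues i = 1) : A = 1 := by
  calc A = cfc (fun x : ℝ ↦ x) A := (cfc_id' ℝ A).symm
    _ = cfc (fun _ : ℝ ↦ 1) A := cfc_congr <| by
        rw [hA.spectrum_real_eq_range_eigenvalues]
        rintro _ ⟨i, rfl⟩
        exact h i
    _ = 1 := cfc_const_one ℝ A

theorem PosDef.two_pow_card_lt_det_one_add {M : Matrix n n ℝ} (hM : M.PosDef)
    (hdet : M.det = 1) (hne : M ≠ 1) : 2 ^ Fintype.card n < (1 + M).det := by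
  set μ := hM.isHermitian.eigenvalues
  have hprod : ∏ i, μ i = 1 := by simpa [hM.isHermitian.det_eq_prod_eigenvalues] using hdet
  obtain ⟨i₀, hi₀⟩ : ∃ i, μ i ≠ 1 := by
    by_contra! h
    exact hne (hM.isHermitian.eq_one_of_eigenvalues_eq_one h)
  have hdet_one_add : (1 + M).det = ∏ i, (1 + μ i) := by
    have h : 1 + M = cfc (fun x : ℝ ↦ 1 + x) M := by
      have : IsSelfAdjoint M := hM.isHermitian
      rw [cfc_const_add (1 : ℝ) (fun x ↦ x) M, cfc_id' ℝ M, map_one]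
    rw [h, hM.isHermitian.det_cfc]
  have hsq : (2 ^ Fintype.card n : ℝ) ^ 2 < (1 + M).det ^ 2 := calc
    (2 ^ Fintype.card n : ℝ) ^ 2 = ∏ i, 4 * μ i := by
      rw [prod_mul_distrib, hprod, prod_const, card_univ, mul_one, ← pow_mul, mul_comm, pow_mul]
      norm_num
    _ < ∏ i, (1 + μ i) ^ 2 := by
      refine prod_lt_prod (fun i _ ↦ by linarith [hM.eigenvalues_pos i])
        (fun i _ ↦ by nlinarith [sq_nonneg (1 - μ i)]) ⟨i₀, mem_univ _, ?_⟩
      nlinarith [sq_pos_of_ne_zero (sub_ne_zero.mpr hi₀)]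
    _ = (1 + M).det ^ 2 := by rw [hdet_one_add, prod_pow]
  exact lt_of_pow_lt_pow_left₀ 2 (hdet_one_add ▸ prod_nonneg fun i _ ↦
    by linarith [hM.eigenvalues_pos i]) hsq

open scoped MatrixOrder in
theorem PosDef.two_pow_card_mul_det_lt_det_add {A B : Matrix n n ℝ} (hA : A.PosDef)
    (hB : B.PosDef) (hdet : B.det = A.det) (hne : A ≠ B) :
    2 ^ Fintype.card n * A.det < (A + B).det := by
  set S := CFC.sqrt A
  have hSS : S * S = A := CFC.sqrt_mul_sqrt_self A hA.posSemidef.nonneg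
  have hS : IsUnit S := isUnit_of_mul_isUnit_left (hSS ▸ hA.isUnit)
  have hSinv : (S⁻¹)ᴴ = S⁻¹ := by
    rw [conjTranspose_nonsing_inv, (nonneg_iff_posSemidef.mp (CFC.sqrt_nonneg A)).isHermitian.eq]
  set M := S⁻¹ * B * S⁻¹
  have hM : M.PosDef := by
    simpa only [hSinv] using hB.conjTranspose_mul_mul_same
      (mulVec_injective_iff_isUnit.mpr (isUnit_nonsing_inv_iff.mpr hS))
  have hSMS : S * M * S = B := by
    simp only [M, ← mul_assoc, mul_nonsing_inv S ((isUnit_iff_isUnit_det S).mp hS), one_mul]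
    simp only [mul_assoc, nonsing_inv_mul S ((isUnit_iff_isUnit_det S).mp hS), mul_one]
  clear_value S M
  have hMdet : M.det = 1 := by
    have h := congrArg det hSMS
    rw [det_mul, det_mul, hdet, ← hSS, det_mul] at h
    have hS0 : S.det ≠ 0 := ((isUnit_iff_isUnit_det S).mp hS).ne_zero
    exact mul_left_cancel₀ (mul_ne_zero hS0 hS0) (by linear_combination h)
  have hMne : M ≠ 1 := by
    rintro h
    rw [h, mul_one, hSS] at hSMS
    exact hne hSMS
  have hsum : A + B = S * (1 + M) * S := by rw [mul_add, add_mul, mul_one, hSS, hSMS]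
  calc 2 ^ Fintype.card n * A.det < (1 + M).det * A.det :=
        mul_lt_mul_of_pos_right (hM.two_pow_card_lt_det_one_add hMdet hMne) hA.det_pos
    _ = (A + B).det := by
        rw [hsum, det_mul, det_mul, ← hSS, det_mul]; ring

theorem transpose_permMatrix_mul_mul_permMatrix {R : Type*} [NonAssocSemiring R]
    (σ : Equiv.Perm n) (A : Matrix n n R) :
    (σ.permMatrix R)ᵀ * A * σ.permMatrix R = A.submatrix ⇑σ⁻¹ ⇑σ⁻¹ := by
  rw [transpose_permMatrix, PEquiv.toMatrix_toPEquiv_mul, PEquiv.mul_toMatrix_toPEquiv,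
    submatrix_submatrix]
  rfl

end Matrix

def ar1CorrMatrix (t : ℕ) (lam : ℝ) : Matrix (Fin t) (Fin t) ℝ :=
  Matrix.of fun i j ↦ lam ^ ((i : ℤ) - (j : ℤ)).natAbs

/-- Row `i` holds the coefficients of `x_i` in the innovations `ε_0, …, ε_i` of the AR(1)
recursion `x_0 = ε_0`, `x_i = λ x_{i-1} + √(1 - λ²) ε_i`. -/
noncomputable def ar1CholeskyEntry (lam : ℝ) (i k : ℕ) : ℝ :=
  if k ≤ i then (if k = 0 then 1 else √(1 - lam ^ 2)) * lam ^ (i - k) else 0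

noncomputable def ar1CholeskyFactor (t : ℕ) (lam : ℝ) : Matrix (Fin t) (Fin t) ℝ :=
  Matrix.of fun i k ↦ ar1CholeskyEntry lam i k

section Cholesky
variable {lam : ℝ}

theorem ar1CholeskyEntry_of_le {i j k : ℕ} (hkj : k ≤ j) (hji : j ≤ i) :
    ar1CholeskyEntry lam i k = lam ^ (i - j) * ar1CholeskyEntry lam j k := by
  simp only [ar1CholeskyEntry, if_pos hkj, if_pos (hkj.trans hji)]
  rw [← Nat.sub_add_sub_cancel hji hkj, pow_add]
  ring

theorem sum_range_ar1CholeskyEntry_sq (h : lam ^ 2 ≤ 1) (j : ℕ) :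
    ∑ k ∈ range (j + 1), ar1CholeskyEntry lam j k ^ 2 = 1 := by
  induction j with
  | zero => simp [ar1CholeskyEntry]
  | succ j ih =>
    have hlast : ar1CholeskyEntry lam (j + 1) (j + 1) ^ 2 = 1 - lam ^ 2 := by
      simp [ar1CholeskyEntry, Real.sq_sqrt (sub_nonneg.mpr h)]
    rw [sum_range_succ, hlast, sum_congr rfl fun k hk ↦ by
      rw [ar1CholeskyEntry_of_le (mem_range_succ_iff.mp hk) (by omega : j ≤ j + 1),
        Nat.add_sub_cancel_left]]
    simp_rw [mul_pow, ← mul_sum, ih]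
    ring

theorem sum_range_ar1CholeskyEntry_mul (h : lam ^ 2 ≤ 1) {i j t : ℕ} (hji : j ≤ i)
    (hit : i < t) :
    ∑ k ∈ range t, ar1CholeskyEntry lam i k * ar1CholeskyEntry lam j k = lam ^ (i - j) := by
  rw [← sum_subset (range_subset_range.mpr (by omega : j + 1 ≤ t)) fun k _ hk ↦ by
    simp [ar1CholeskyEntry, show ¬k ≤ j by simpa using hk]]
  rw [sum_congr rfl fun k hk ↦ by rw [ar1CholeskyEntry_of_le (mem_range_succ_iff.mp hk) hji]]
  simp_rw [mul_assoc, ← mul_sum, ← sq, sum_range_ar1CholeskyEntry_sq h, mul_one]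

theorem ar1CorrMatrix_eq_mul_transpose (t : ℕ) (h : lam ^ 2 ≤ 1) :
    ar1CorrMatrix t lam = ar1CholeskyFactor t lam * (ar1CholeskyFactor t lam)ᵀ := by
  ext i j
  simp only [ar1CorrMatrix, ar1CholeskyFactor, mul_apply, of_apply, transpose_apply]
  rw [Fin.sum_univ_eq_sum_range (fun k ↦ ar1CholeskyEntry lam i k * ar1CholeskyEntry lam j k)]
  rcases le_total (j : ℕ) i with hji | hij
  · rw [sum_range_ar1CholeskyEntry_mul h hji i.isLt]
    congr 1
    omega
  · simp_rw [mul_comm (ar1CholeskyEntry lam i _)]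
    rw [sum_range_ar1CholeskyEntry_mul h hij j.isLt]
    congr 1
    omega

theorem det_ar1CholeskyFactor_ne_zero (t : ℕ) (h : lam ^ 2 < 1) :
    (ar1CholeskyFactor t lam).det ≠ 0 := by
  rw [det_of_isLowerTriangular _ fun i k (hik : i < k) ↦ by
    have : ¬(k : ℕ) ≤ i := by omega
    simp only [ar1CholeskyFactor, ar1CholeskyEntry, of_apply, if_neg this]]
  refine prod_ne_zero_iff.mpr fun i _ ↦ ?_
  have : 0 < √(1 - lam ^ 2) := Real.sqrt_pos.mpr (by linarith)
  by_cases hi : (i : ℕ) = 0 <;> simp [ar1CholeskyFactor, ar1CholeskyEntry, hi, this.ne']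

theorem ar1CorrMatrix_posDef (t : ℕ) (h : lam ^ 2 < 1) : (ar1CorrMatrix t lam).PosDef := by
  rw [ar1CorrMatrix_eq_mul_transpose t h.le, ← conjTranspose_eq_transpose_of_trivial]
  exact PosDef.mul_conjTranspose_self _ <| vecMul_injective_iff_isUnit.mpr <|
    (isUnit_iff_isUnit_det _).mpr (det_ar1CholeskyFactor_ne_zero t h).isUnit

end Cholesky

theorem eq_one_of_submatrix_ar1CorrMatrix_eq {t : ℕ} {lam : ℝ} (hlam₀ : 0 < lam) (hlam₁ : lam ≠ 1)
    {τ : Equiv.Perm (Fin t)} (h0 : ∀ i : Fin t, (i : ℕ) = 0 → τ i = i)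
    (h : (ar1CorrMatrix t lam).submatrix τ τ = ar1CorrMatrix t lam) : τ = 1 := by
  ext b
  have hb := congrFun (congrFun h ⟨0, b.pos⟩) b
  simp only [ar1CorrMatrix, submatrix_apply, of_apply, h0 ⟨0, b.pos⟩ rfl] at hb
  have := pow_right_injective₀ hlam₀ hlam₁ hb
  simp only [Equiv.Perm.coe_one, id_eq]
  omega

theorem stmt15_general {t : ℕ} (lam : ℝ) (hlam : lam ∈ Set.Ioo (0 : ℝ) 1)
    (V : Matrix (Fin t) (Fin t) ℝ)
    (hV : ∀ i j, V i j = lam ^ (((i : ℤ) - (j : ℤ)).natAbs))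
    (σ : Equiv.Perm (Fin t))
    (h0 : ∀ i : Fin t, (i : ℕ) = 0 → σ i = i)
    (P : Matrix (Fin t) (Fin t) ℝ) (hP : P = σ.permMatrix ℝ) (hPne : P ≠ 1) :
    ((V⁻¹ + Pᵀ * V⁻¹ * P)⁻¹).det < V.det / 2 ^ t := by
  have hVeq : V = ar1CorrMatrix t lam := Matrix.ext hV
  have hVpos : V.PosDef := hVeq ▸ ar1CorrMatrix_posDef t (by nlinarith [hlam.1, hlam.2])
  have hconj : Pᵀ * V⁻¹ * P = V⁻¹.submatrix ⇑σ⁻¹ ⇑σ⁻¹ :=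
    hP ▸ transpose_permMatrix_mul_mul_permMatrix σ V⁻¹
  have hne : V⁻¹ ≠ Pᵀ * V⁻¹ * P := fun h ↦ hPne <| by
    have hV_inv := congrArg Inv.inv (h.trans hconj)
    rw [inv_submatrix_equiv, nonsing_inv_nonsing_inv _ hVpos.det_pos.ne'.isUnit, hVeq] at hV_inv
    have hσ := eq_one_of_submatrix_ar1CorrMatrix_eq hlam.1 hlam.2.ne
      (fun i hi ↦ by rw [Equiv.Perm.inv_eq_iff_eq, h0 i hi]) hV_inv.symm
    rw [hP, inv_eq_one.mp hσ, permMatrix_one]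
  have hmink := hVpos.inv.two_pow_card_mul_det_lt_det_add
    (hconj ▸ hVpos.inv.submatrix (σ⁻¹).injective)
    (hconj ▸ det_submatrix_equiv_self σ⁻¹ V⁻¹) hne
  rw [Fintype.card_fin] at hmink
  calc ((V⁻¹ + Pᵀ * V⁻¹ * P)⁻¹).det = (V⁻¹ + Pᵀ * V⁻¹ * P).det⁻¹ := by
        rw [det_nonsing_inv, Ring.inverse_eq_inv']
    _ < (2 ^ t * (V⁻¹).det)⁻¹ := inv_strictAnti₀ (by positivity [hVpos.inv.det_pos]) hmink
    _ = V.det / 2 ^ t := by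
        rw [det_nonsing_inv, Ring.inverse_eq_inv', mul_inv, inv_inv, div_eq_mul_inv, mul_comm]

/-- For the AR(1)-type matrix V_{ij} = λ^{|i−j|} with t > 3 and P ≠ I a
permutation matrix of the form 1 ⊕ Q ⊕ 1 (fixing first and last coordinates),
det((V⁻¹ + PᵀV⁻¹P)⁻¹) < det(V)/2^t. -/
theorem stmt15 {t : ℕ} (ht : 3 < t) (lam : ℝ) (hlam : lam ∈ Set.Ioo (0 : ℝ) 1)
    (V : Matrix (Fin t) (Fin t) ℝ)
    (hV : ∀ i j, V i j = lam ^ (((i : ℤ) - (j : ℤ)).natAbs))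
    (σ : Equiv.Perm (Fin t))
    (h0 : ∀ i : Fin t, (i : ℕ) = 0 → σ i = i)
    (hlast : ∀ i : Fin t, (i : ℕ) = t - 1 → σ i = i)
    (P : Matrix (Fin t) (Fin t) ℝ) (hP : P = σ.permMatrix ℝ) (hPne : P ≠ 1) :
    ((V⁻¹ + Pᵀ * V⁻¹ * P)⁻¹).det < V.det / 2 ^ t :=
  stmt15_general lam hlam V hV σ h0 P hP hPne
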